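/- In the formal power series ring ℚ[x,y][[t]], the following denominator-free form of Gessel's formula holds: (Σ_{n≥0} L_n(x,y)·tⁿ/n!) · (Σ_{n≥0} (y² − x²)ⁿ·t^{2n}/(2n)! − y·Σ_{n≥0} (y² − x²)ⁿ·t^{2n+1}/(2n+1)!) = x. -/

import Mathlib

open MvPolynomial

/-- The `i`-th entry (1-indexed) of the permutation `σ` of `[n]`, with the
convention that positions `0` and `> n` carry the entry `0`. -/
def permEntry (n : ℕ) (σ : Equiv.Perm (Fin n)) (i : ℕ) : ℕ :=
  if h : 1 ≤ i ∧ i ≤ n then ((σ ⟨i - 1, by omega⟩ : Fin n) : ℕ) + 1 else 0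

/-- The number of left peaks of `σ`: indices `1 ≤ i ≤ n-1` with
`σ_{i-1} < σ_i > σ_{i+1}`, convention `σ₀ = 0`. -/
def leftPeakCount (n : ℕ) (σ : Equiv.Perm (Fin n)) : ℕ :=
  ((Finset.Icc 1 (n - 1)).filter fun i =>
    permEntry n σ (i - 1) < permEntry n σ i ∧ permEntry n σ (i + 1) < permEntry n σ i).card

/-- The number of exterior peaks of `σ`: indices `1 ≤ i ≤ n` with
`σ_{i-1} < σ_i > σ_{i+1}`, conventions `σ₀ = σ_{n+1} = 0`. -/
def extPeakCount (n : ℕ) (σ : Equiv.Perm (Fin n)) : ℕ :=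
  ((Finset.Icc 1 n).filter fun i =>
    permEntry n σ (i - 1) < permEntry n σ i ∧ permEntry n σ (i + 1) < permEntry n σ i).card

/-- The number of interior peaks of `σ`: indices `2 ≤ i ≤ n-1` with
`σ_{i-1} < σ_i > σ_{i+1}`. -/
def intPeakCount (n : ℕ) (σ : Equiv.Perm (Fin n)) : ℕ :=
  ((Finset.Icc 2 (n - 1)).filter fun i =>
    permEntry n σ (i - 1) < permEntry n σ i ∧ permEntry n σ (i + 1) < permEntry n σ i).card

/-- The number of up-down runs of `σ`: maximal monotone segments of the
extended sequence `0, σ₁, …, σₙ`, i.e. one more than the number of direction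
changes of that sequence (and `0` for `n = 0`). -/
def udRunCount (n : ℕ) (σ : Equiv.Perm (Fin n)) : ℕ :=
  if n = 0 then 0 else
    1 + ((Finset.Icc 1 (n - 1)).filter fun i =>
      (permEntry n σ (i - 1) < permEntry n σ i ∧ permEntry n σ (i + 1) < permEntry n σ i) ∨
      (permEntry n σ i < permEntry n σ (i - 1) ∧ permEntry n σ i < permEntry n σ (i + 1))).card

/-- The number of alternating runs of `σ`: maximal monotone segments of
`σ₁, …, σₙ`, i.e. one more than the number of direction changes (and `0` for `n = 0`). -/
def altRunCount (n : ℕ) (σ : Equiv.Perm (Fin n)) : ℕ :=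
  if n = 0 then 0 else
    1 + ((Finset.Icc 2 (n - 1)).filter fun i =>
      (permEntry n σ (i - 1) < permEntry n σ i ∧ permEntry n σ (i + 1) < permEntry n σ i) ∨
      (permEntry n σ i < permEntry n σ (i - 1) ∧ permEntry n σ i < permEntry n σ (i + 1))).card

/-- `L n k` : the number of permutations of `[n]` with exactly `k` left peaks. -/
def leftPeakNum (n k : ℕ) : ℕ :=
  (Finset.univ.filter fun σ : Equiv.Perm (Fin n) => leftPeakCount n σ = k).card

/-- `W n k` : the number of permutations of `[n]` with exactly `k` exterior peaks. -/
def extPeakNum (n k : ℕ) : ℕ :=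
  (Finset.univ.filter fun σ : Equiv.Perm (Fin n) => extPeakCount n σ = k).card

/-- `M n k` : the number of permutations of `[n]` with exactly `k` interior peaks. -/
def intPeakNum (n k : ℕ) : ℕ :=
  (Finset.univ.filter fun σ : Equiv.Perm (Fin n) => intPeakCount n σ = k).card

/-- `Λ n k` : the number of permutations of `[n]` with exactly `k` up-down runs. -/
def udRunNum (n k : ℕ) : ℕ :=
  (Finset.univ.filter fun σ : Equiv.Perm (Fin n) => udRunCount n σ = k).card

/-- `R n k` : the number of permutations of `[n]` with exactly `k` alternating runs. -/
def altRunNum (n k : ℕ) : ℕ :=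
  (Finset.univ.filter fun σ : Equiv.Perm (Fin n) => altRunCount n σ = k).card

/-- The bivariate left peak polynomial
`L_n(x,y) = Σ_{k=0}^{⌊n/2⌋} L(n,k)·x^{2k+1}·y^{n−2k}`. -/
noncomputable def Lb (n : ℕ) : MvPolynomial (Fin 2) ℚ :=
  ∑ k ∈ Finset.range (n / 2 + 1),
    (leftPeakNum n k : MvPolynomial (Fin 2) ℚ) * X 0 ^ (2 * k + 1) * X 1 ^ (n - 2 * k)

/-!
Inserting `n + 1` into the `n + 1` slots of a permutation `τ` of `[n]` with `k` left peaks gives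
`n - 2k` permutations with `k + 1` left peaks (slot `j < n` with neither `j` nor `j + 1` a left
peak of `τ`) and `2k + 1` with `k` left peaks. Hence `L_{n+1} = D L_n` for the derivation
`D = xy ∂ₓ + x² ∂_y` of `ℚ[x,y]`, as
`D (x^{2k+1} y^{n-2k}) = (2k+1) x^{2k+1} y^{n+1-2k} + (n-2k) x^{2k+3} y^{n-1-2k}`.
Since `D` kills `y² - x²`, the coefficients `a_m` of the second factor satisfy
`a_{m+1} = D a_m - y a_m`. By the Leibniz rule the binomial convolutions
`s_N = Σ (N choose i) L_i a_{N-i}`, which are `N!` times the coefficients of the product, satisfy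
`s_{N+1} = D s_N - y s_N`; as `s_0 = x` and `D x = xy`, all `s_N` with `N ≥ 1` vanish.
-/

open Finset

section BinomialConvolution

variable {R A : Type*} [CommSemiring R] [CommSemiring A] [Algebra R A]

def binomialConvolution (f g : ℕ → A) (N : ℕ) : A :=
  ∑ ij ∈ antidiagonal N, N.choose ij.1 • (f ij.1 * g ij.2)

theorem binomialConvolution_zero (f g : ℕ → A) :
    binomialConvolution f g 0 = f 0 * g 0 := by
  simp [binomialConvolution]

theorem binomialConvolution_succ (D : Derivation R A A) {a b : A} {f g : ℕ → A}
    (hf : ∀ n, f (n + 1) = D (f n) + a * f n) (hg : ∀ n, g (n + 1) = D (g n) + b * g n)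
    (N : ℕ) :
    binomialConvolution f g (N + 1) =
      D (binomialConvolution f g N) + (a + b) * binomialConvolution f g N := by
  rw [binomialConvolution, sum_antidiagonal_choose_succ_nsmul (fun i j => f i * g j),
    binomialConvolution, map_sum, mul_sum, ← sum_add_distrib, ← sum_add_distrib]
  refine sum_congr rfl fun ij hij => ?_
  rw [Nat.choose_symm_of_eq_add (mem_antidiagonal.mp hij).symm, hf, hg, map_nsmul,
    Derivation.leibniz, smul_eq_mul, smul_eq_mul, mul_smul_comm]
  simp only [nsmul_eq_mul]
  ring

theorem coeff_egf_mul_egf [Algebra ℚ A] (f g : ℕ → A) (N : ℕ) :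
    PowerSeries.coeff N (PowerSeries.mk (fun n => (n.factorial : ℚ)⁻¹ • f n) *
        PowerSeries.mk (fun n => (n.factorial : ℚ)⁻¹ • g n)) =
      (N.factorial : ℚ)⁻¹ • binomialConvolution f g N := by
  rw [PowerSeries.coeff_mul, binomialConvolution, smul_sum]
  refine sum_congr rfl fun ij hij => ?_
  obtain ⟨i, j⟩ := ij
  obtain rfl : N = i + j := (mem_antidiagonal.mp hij).symm
  rw [PowerSeries.coeff_mk, PowerSeries.coeff_mk, smul_mul_smul_comm,
    ← Nat.cast_smul_eq_nsmul ℚ, smul_smul, Nat.cast_add_choose]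
  field_simp

end BinomialConvolution

noncomputable def leftPeakDeriv :
    Derivation ℚ (MvPolynomial (Fin 2) ℚ) (MvPolynomial (Fin 2) ℚ) :=
  (X 0 * X 1 : MvPolynomial (Fin 2) ℚ) • pderiv 0 +
    (X 0 ^ 2 : MvPolynomial (Fin 2) ℚ) • pderiv 1

@[simp]
theorem leftPeakDeriv_X_zero : leftPeakDeriv (X 0) = X 0 * X 1 := by
  simp [leftPeakDeriv, pderiv_X]

@[simp]
theorem leftPeakDeriv_X_one : leftPeakDeriv (X 1) = X 0 ^ 2 := by
  simp [leftPeakDeriv, pderiv_X]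

noncomputable def peakWeight (n k : ℕ) : MvPolynomial (Fin 2) ℚ :=
  X 0 ^ (2 * k + 1) * X 1 ^ (n - 2 * k)

theorem leftPeakDeriv_peakWeight {n k : ℕ} (h : 2 * k ≤ n) :
    leftPeakDeriv (peakWeight n k) =
      (2 * k + 1) • peakWeight (n + 1) k + (n - 2 * k) • peakWeight (n + 1) (k + 1) := by
  obtain ⟨m, rfl⟩ := Nat.exists_eq_add_of_le h
  simp only [peakWeight, Derivation.leibniz, Derivation.leibniz_pow, leftPeakDeriv_X_zero,
    leftPeakDeriv_X_one, smul_eq_mul, nsmul_eq_mul]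
  rcases m with _ | m
  · simp only [Nat.add_zero, Nat.sub_self, Nat.add_sub_cancel_left]
    push_cast
    ring_nf
  · rw [show 2 * k + (m + 1) + 1 - 2 * k = m + 2 by omega,
      show 2 * k + (m + 1) + 1 - 2 * (k + 1) = m by omega, Nat.add_sub_cancel_left]
    push_cast
    ring_nf

section InsertMax

variable {n : ℕ}

/-- In one-line notation, `τ` with the new maximum `n + 1` inserted at (0-indexed) position `j`. -/
def insertMax (τ : Equiv.Perm (Fin n)) (j : Fin (n + 1)) : Equiv.Perm (Fin (n + 1)) :=
  (finSuccEquiv' j).trans ((Equiv.optionCongr τ).trans (finSuccEquiv' (Fin.last n)).symm)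

@[simp]
theorem insertMax_apply_self (τ : Equiv.Perm (Fin n)) (j : Fin (n + 1)) :
    insertMax τ j j = Fin.last n := by
  simp [insertMax]

@[simp]
theorem insertMax_apply_succAbove (τ : Equiv.Perm (Fin n)) (j : Fin (n + 1)) (k : Fin n) :
    insertMax τ j (j.succAbove k) = (τ k).castSucc := by
  simp [insertMax]

theorem insertMax_symm_apply_last (τ : Equiv.Perm (Fin n)) (j : Fin (n + 1)) :
    (insertMax τ j).symm (Fin.last n) = j :=
  (Equiv.symm_apply_eq _).mpr (insertMax_apply_self τ j).symm

theorem insertMax_injective :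
    Function.Injective fun p : Equiv.Perm (Fin n) × Fin (n + 1) => insertMax p.1 p.2 := by
  rintro ⟨τ, j⟩ ⟨τ', j'⟩ h
  dsimp only at h
  obtain rfl : j = j' := by
    rw [← insertMax_symm_apply_last τ j, h, insertMax_symm_apply_last]
  refine Prod.ext (Equiv.ext fun k => Fin.castSucc_injective _ ?_) rfl
  rw [← insertMax_apply_succAbove, h, insertMax_apply_succAbove]

theorem insertMax_bijective :
    Function.Bijective fun p : Equiv.Perm (Fin n) × Fin (n + 1) => insertMax p.1 p.2 := by
  rw [Fintype.bijective_iff_injective_and_card]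
  refine ⟨insertMax_injective, ?_⟩
  simp [Fintype.card_perm, Nat.factorial_succ, mul_comm]

theorem permEntry_eq_of_val_add_one (σ : Equiv.Perm (Fin n)) {i : ℕ} (x : Fin n)
    (hx : (x : ℕ) + 1 = i) : permEntry n σ i = σ x + 1 := by
  subst hx
  rw [permEntry, dif_pos ⟨by omega, x.isLt⟩]
  rfl

theorem permEntry_insertMax (τ : Equiv.Perm (Fin n)) (j : Fin (n + 1)) (i : ℕ) :
    permEntry (n + 1) (insertMax τ j) i =
      if i = j + 1 then n + 1
      else if i ≤ j then permEntry n τ i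
      else permEntry n τ (i - 1) := by
  by_cases hi : 1 ≤ i ∧ i ≤ n + 1
  · let x : Fin (n + 1) := ⟨i - 1, by omega⟩
    rw [permEntry_eq_of_val_add_one _ x (by simp [x]; omega)]
    by_cases hx : x = j
    · rw [hx, insertMax_apply_self, if_pos (by rw [← hx]; simp [x]; omega)]
      simp
    obtain ⟨k, hk⟩ := Fin.exists_succAbove_eq hx
    rw [← hk, insertMax_apply_succAbove, Fin.val_castSucc]
    rcases lt_or_ge k.castSucc j with hkj | hkj
    · rw [Fin.succAbove_of_castSucc_lt _ _ hkj] at hk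
      have hk' : (k : ℕ) = i - 1 := by simpa [x] using congrArg Fin.val hk
      rw [Fin.lt_def, Fin.val_castSucc] at hkj
      rw [if_neg (by omega), if_pos (by omega), permEntry_eq_of_val_add_one τ k (by omega)]
    · rw [Fin.succAbove_of_le_castSucc _ _ hkj] at hk
      have hk' : (k : ℕ) + 1 = i - 1 := by simpa [x] using congrArg Fin.val hk
      rw [Fin.le_def, Fin.val_castSucc] at hkj
      rw [if_neg (by omega), if_neg (by omega), permEntry_eq_of_val_add_one τ k (by omega)]
  · rw [permEntry, dif_neg hi, if_neg (by omega), permEntry, permEntry]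
    split_ifs <;> first | rfl | omega

def leftPeaks (n : ℕ) (σ : Equiv.Perm (Fin n)) : Finset ℕ :=
  (Icc 1 (n - 1)).filter fun i =>
    permEntry n σ (i - 1) < permEntry n σ i ∧ permEntry n σ (i + 1) < permEntry n σ i

theorem leftPeakCount_eq_card (σ : Equiv.Perm (Fin n)) :
    leftPeakCount n σ = #(leftPeaks n σ) := rfl

theorem mem_leftPeaks {σ : Equiv.Perm (Fin n)} {i : ℕ} :
    i ∈ leftPeaks n σ ↔ 1 ≤ i ∧ i + 1 ≤ n ∧
      permEntry n σ (i - 1) < permEntry n σ i ∧ permEntry n σ (i + 1) < permEntry n σ i := by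
  rw [leftPeaks, mem_filter, mem_Icc]
  omega

theorem succ_notMem_leftPeaks {σ : Equiv.Perm (Fin n)} {i : ℕ} (h : i ∈ leftPeaks n σ) :
    i + 1 ∉ leftPeaks n σ := by
  rw [mem_leftPeaks] at h ⊢
  simp only [Nat.add_sub_cancel]
  omega

theorem mem_leftPeaks_insertMax {τ : Equiv.Perm (Fin n)} {j : Fin (n + 1)} {i : ℕ} :
    i ∈ leftPeaks (n + 1) (insertMax τ j) ↔
      (i < j ∧ i ∈ leftPeaks n τ) ∨ (i = j + 1 ∧ (j : ℕ) < n) ∨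
        (j + 2 < i ∧ i - 1 ∈ leftPeaks n τ) := by
  have hle (i : ℕ) : permEntry n τ i ≤ n := by
    unfold permEntry; split_ifs <;> omega
  rcases i with _ | i
  · simp [mem_leftPeaks]
  simp only [mem_leftPeaks, permEntry_insertMax, Nat.add_sub_cancel]
  have := hle (i - 1); have := hle i; have := hle (i + 1); have := hle (i + 1 + 1)
  split_ifs <;> omega

/-- The new maximum at position `j + 1` destroys the left peaks of `τ` at its neighbours `j` and
`j + 1`; all other left peaks survive, shifted past the new entry. -/
theorem card_erase_leftPeaks_insertMax (τ : Equiv.Perm (Fin n)) (j : Fin (n + 1)) :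
    #((leftPeaks (n + 1) (insertMax τ j)).erase (j + 1)) =
      #(((leftPeaks n τ).erase j).erase (j + 1)) := by
  refine card_nbij' (fun a => if a ≤ j then a else a - 1)
    (fun a => if a ≤ j then a else a + 1) ?_ ?_ ?_ ?_ <;>
  · intro a ha
    simp only [coe_erase, Set.mem_sdiff, mem_coe, Set.mem_singleton_iff,
      mem_leftPeaks_insertMax] at ha ⊢
    grind

theorem leftPeakCount_insertMax (τ : Equiv.Perm (Fin n)) (j : Fin (n + 1)) :
    leftPeakCount (n + 1) (insertMax τ j) =
      if (j : ℕ) < n ∧ (j : ℕ) ∉ leftPeaks n τ ∧ (j : ℕ) + 1 ∉ leftPeaks n τ then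
        leftPeakCount n τ + 1
      else leftPeakCount n τ := by
  have hS := card_erase_leftPeaks_insertMax τ j
  have hnew : (j : ℕ) + 1 ∈ leftPeaks (n + 1) (insertMax τ j) ↔ (j : ℕ) < n := by
    rw [mem_leftPeaks_insertMax]; omega
  have hcard (s : Finset ℕ) (a : ℕ) : #(s.erase a) + (if a ∈ s then 1 else 0) = #s := by
    split_ifs with h
    exacts [card_erase_add_one h, by rw [erase_eq_of_notMem h, add_zero]]
  have hS' := hcard (leftPeaks (n + 1) (insertMax τ j)) (j + 1)
  have hP' := hcard (leftPeaks n τ) j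
  have hP'' := hcard ((leftPeaks n τ).erase j) (j + 1)
  have hj : (j : ℕ) ∈ leftPeaks n τ → (j : ℕ) + 1 ∉ leftPeaks n τ := succ_notMem_leftPeaks
  have hjn : (j : ℕ) ∈ leftPeaks n τ → (j : ℕ) < n := fun h => by
    rw [mem_leftPeaks] at h; omega
  have hj1n : (j : ℕ) + 1 ∈ leftPeaks n τ → (j : ℕ) < n := fun h => by
    rw [mem_leftPeaks] at h; omega
  rw [leftPeakCount_eq_card, leftPeakCount_eq_card]
  grind

theorem card_freeSlots_add_two_mul_leftPeakCount (τ : Equiv.Perm (Fin n)) :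
    #((range (n + 1)).filter fun j => j < n ∧ j ∉ leftPeaks n τ ∧ j + 1 ∉ leftPeaks n τ) +
      2 * leftPeakCount n τ = n := by
  rw [leftPeakCount_eq_card]
  set P := leftPeaks n τ
  have hP {a : ℕ} (ha : a ∈ P) : 1 ≤ a ∧ a + 1 ≤ n := by
    rw [mem_leftPeaks] at ha; omega
  have hbad : (range (n + 1)).filter (fun j => ¬(j < n ∧ j ∉ P ∧ j + 1 ∉ P)) =
      insert n (P ∪ P.image (· - 1)) := by
    ext j
    simp only [mem_filter, mem_range, mem_insert, mem_union, mem_image]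
    constructor
    · rintro ⟨hj, hbad⟩
      grind
    · rintro (hj | hj | ⟨a, ha, rfl⟩)
      · exact ⟨by omega, fun h => by omega⟩
      · exact ⟨by have := hP hj; omega, fun h => h.2.1 hj⟩
      · have := hP ha
        refine ⟨by omega, fun h => h.2.2 ?_⟩
        rwa [Nat.sub_add_cancel this.1]
  have hdisj : Disjoint P (P.image (· - 1)) := by
    simp only [disjoint_left, mem_image, not_exists, not_and]
    intro a ha b hb hba
    have := hP hb
    exact succ_notMem_leftPeaks ha (by rwa [← hba, Nat.sub_add_cancel this.1])
  have hinj : Set.InjOn (· - 1) (P : Set ℕ) := fun a ha b hb hab => by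
    have := hP ha; have := hP hb; simp only at hab; omega
  have hn : n ∉ P ∪ P.image (· - 1) := by
    simp only [mem_union, mem_image, not_or, not_exists, not_and]
    exact ⟨fun h => by have := hP h; omega, fun a ha _ => by have := hP ha; omega⟩
  have := card_filter_add_card_filter_not (s := range (n + 1))
    (p := fun j => j < n ∧ j ∉ P ∧ j + 1 ∉ P)
  rw [hbad, card_insert_of_notMem hn, card_union_of_disjoint hdisj,
    card_image_of_injOn hinj, card_range] at this
  omega

end InsertMax

theorem Lb_eq_sum_peakWeight (m : ℕ) :
    Lb m = ∑ σ : Equiv.Perm (Fin m), peakWeight m (leftPeakCount m σ) := by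
  rw [← sum_fiberwise_of_maps_to (g := leftPeakCount m) (t := range (m / 2 + 1)) fun σ _ => by
    have := card_freeSlots_add_two_mul_leftPeakCount σ
    rw [mem_range]
    omega]
  refine sum_congr rfl fun k _ => ?_
  rw [sum_congr rfl fun σ hσ => by rw [(mem_filter.mp hσ).2], sum_const, leftPeakNum,
    nsmul_eq_mul, peakWeight, mul_assoc]

theorem Lb_zero : Lb 0 = X 0 := by
  simp [Lb, leftPeakNum, leftPeakCount]

theorem sum_peakWeight_leftPeakCount_insertMax {n : ℕ} (τ : Equiv.Perm (Fin n)) :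
    ∑ j : Fin (n + 1), peakWeight (n + 1) (leftPeakCount (n + 1) (insertMax τ j)) =
      leftPeakDeriv (peakWeight n (leftPeakCount n τ)) := by
  have hfree := card_freeSlots_add_two_mul_leftPeakCount τ
  have hcompl := card_filter_add_card_filter_not (s := range (n + 1))
    (p := fun j => j < n ∧ j ∉ leftPeaks n τ ∧ j + 1 ∉ leftPeaks n τ)
  rw [card_range] at hcompl
  simp only [leftPeakCount_insertMax, apply_ite (peakWeight (n + 1))]
  rw [Fin.sum_univ_eq_sum_range (fun j =>
      if j < n ∧ j ∉ leftPeaks n τ ∧ j + 1 ∉ leftPeaks n τ then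
        peakWeight (n + 1) (leftPeakCount n τ + 1)
      else peakWeight (n + 1) (leftPeakCount n τ)),
    sum_ite, sum_const, sum_const, leftPeakDeriv_peakWeight (by omega), add_comm]
  congr 2 <;> omega

theorem Lb_succ (n : ℕ) : Lb (n + 1) = leftPeakDeriv (Lb n) := by
  rw [Lb_eq_sum_peakWeight, Lb_eq_sum_peakWeight, map_sum,
    ← (Equiv.ofBijective _ insertMax_bijective).sum_comp, Fintype.sum_prod_type]
  exact sum_congr rfl fun τ _ => sum_peakWeight_leftPeakCount_insertMax τ

noncomputable def gesselCoeff (m : ℕ) : MvPolynomial (Fin 2) ℚ :=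
  if Even m then (X 1 ^ 2 - X 0 ^ 2) ^ (m / 2) else -(X 1 * (X 1 ^ 2 - X 0 ^ 2) ^ (m / 2))

theorem gesselCoeff_zero : gesselCoeff 0 = 1 := by
  simp [gesselCoeff]

theorem leftPeakDeriv_sq_sub_sq : leftPeakDeriv (X 1 ^ 2 - X 0 ^ 2) = 0 := by
  simp only [map_sub, Derivation.leibniz_pow, leftPeakDeriv_X_zero, leftPeakDeriv_X_one,
    nsmul_eq_mul, smul_eq_mul]
  ring

theorem gesselCoeff_succ (m : ℕ) :
    gesselCoeff (m + 1) = leftPeakDeriv (gesselCoeff m) + -X 1 * gesselCoeff m := by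
  have hu (j : ℕ) : leftPeakDeriv ((X 1 ^ 2 - X 0 ^ 2) ^ j) = 0 := by
    rw [Derivation.leibniz_pow, leftPeakDeriv_sq_sub_sq, smul_zero, smul_zero]
  have hodd (j : ℕ) : ¬Even (2 * j + 1) := Nat.not_even_two_mul_add_one j
  have hhalf (j : ℕ) : (2 * j + 1) / 2 = j := by omega
  rcases Nat.even_or_odd' m with ⟨j, rfl | rfl⟩
  · simp only [gesselCoeff, even_two_mul, hodd, if_true, if_false, hu, hhalf,
      Nat.mul_div_cancel_left _ two_pos]
    ring
  · simp only [gesselCoeff, hodd, show 2 * j + 1 + 1 = 2 * (j + 1) by ring, even_two_mul,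
      if_true, if_false, hhalf, Nat.mul_div_cancel_left _ two_pos, map_neg,
      Derivation.leibniz, hu, leftPeakDeriv_X_one, smul_eq_mul]
    ring

theorem binomialConvolution_Lb_gesselCoeff_succ (N : ℕ) :
    binomialConvolution Lb gesselCoeff (N + 1) = 0 := by
  have hLb (n : ℕ) : Lb (n + 1) = leftPeakDeriv (Lb n) + 0 * Lb n := by
    rw [Lb_succ, zero_mul, add_zero]
  induction N with
  | zero =>
    rw [binomialConvolution_succ leftPeakDeriv hLb gesselCoeff_succ, binomialConvolution_zero,
      Lb_zero, gesselCoeff_zero, mul_one, leftPeakDeriv_X_zero]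
    ring
  | succ N ih =>
    rw [binomialConvolution_succ leftPeakDeriv hLb gesselCoeff_succ, ih, map_zero, mul_zero,
      add_zero]

/-- in `ℚ[x,y][[t]]`,
`(Σ_{n≥0} L_n(x,y)·tⁿ/n!) · (Σ_{n≥0} (y²−x²)ⁿ·t^{2n}/(2n)! − y·Σ_{n≥0} (y²−x²)ⁿ·t^{2n+1}/(2n+1)!) = x`. -/
theorem stmt_9 :
    (PowerSeries.mk fun n => ((n.factorial : ℚ))⁻¹ • Lb n) *
      (PowerSeries.mk fun m =>
        if Even m then
          ((m.factorial : ℚ))⁻¹ • (((X 1 ^ 2 - X 0 ^ 2) ^ (m / 2) : MvPolynomial (Fin 2) ℚ))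
        else
          -(((m.factorial : ℚ))⁻¹ • (X 1 * (X 1 ^ 2 - X 0 ^ 2) ^ (m / 2))))
      = PowerSeries.C (X 0) := by
  have hdenom : (PowerSeries.mk fun m =>
      if Even m then
        ((m.factorial : ℚ))⁻¹ • (((X 1 ^ 2 - X 0 ^ 2) ^ (m / 2) : MvPolynomial (Fin 2) ℚ))
      else -(((m.factorial : ℚ))⁻¹ • (X 1 * (X 1 ^ 2 - X 0 ^ 2) ^ (m / 2)))) =
      PowerSeries.mk fun m => (m.factorial : ℚ)⁻¹ • gesselCoeff m := by
    ext m
    simp only [PowerSeries.coeff_mk, gesselCoeff]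
    split_ifs <;> simp only [smul_neg]
  ext N
  rw [hdenom, coeff_egf_mul_egf, PowerSeries.coeff_C]
  rcases N with _ | N
  · simp [binomialConvolution_zero, Lb_zero, gesselCoeff_zero]
  · rw [binomialConvolution_Lb_gesselCoeff_succ, smul_zero, if_neg N.succ_ne_zero]
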